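/- arXiv:2306.10655 — 2 statements merged into one kernel-verified Lean document; each statement's English description precedes it below -/
import Mathlib

section
/- Let 0 < α < 1, γ > 0 and n ≥ 1. There is a unique real r_0 > 0 satisfying α e^{r_0} (n + γ r_0) = n; it satisfies n(n+γ)^{−1} log(1/α) < r_0 < log(1/α), and the bound |t_n| ≤ (1−α)^γ n! (γ r_0)^{−n−γ} (n + γ r_0)^{γ} holds. Moreover, for every r with 0 < r < log(1/α) one has |t_n| ≤ (1−α)^γ γ^{−n} n! r^{−n} (1 − α e^{r})^{−γ}. -/
/-- Pochhammer symbol `(γ)_l = γ(γ+1)⋯(γ+l−1)`. -/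
noncomputable def poch (γ : ℝ) (l : ℕ) : ℝ := ∏ i ∈ Finset.range l, (γ + i)

/-- Stirling numbers of the second kind. -/
def stirling2 : ℕ → ℕ → ℕ
  | 0, 0 => 1
  | 0, _+1 => 0
  | _+1, 0 => 0
  | n+1, k+1 => (k+1) * stirling2 n (k+1) + stirling2 n k

/-- `t_n(α,γ) = (−1)^n γ^{−n} ∑_{i=0}^n S(n,i) (γ)_i (α/(1−α))^i`. -/
noncomputable def tcoef (α γ : ℝ) (n : ℕ) : ℝ :=
  (-1)^n * (γ^n)⁻¹ *
    ∑ i ∈ Finset.range (n+1), (stirling2 n i : ℝ) * poch γ i * (α/(1-α))^i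

/-!
With `x = α/(1-α)` one has `|tₙ| = γ⁻ⁿ ∑ S(n,i) (γ)ᵢ xⁱ`. Since `S(n,i) rⁿ/n!` is a coefficient of
the exponential generating function `(eʳ-1)ⁱ/i!`, whose coefficients are nonnegative,
`S(n,i) ≤ n! r⁻ⁿ (eʳ-1)ⁱ/i!` for every `r > 0`. The resulting sum is a partial sum of the binomial
series `∑ (γ)ᵢ yⁱ/i! = (1-y)^{-γ}` at `y = x(eʳ-1)`, which has nonnegative terms, and
`1 - y = (1 - α eʳ)/(1 - α)`; this is the bound for arbitrary `r`.

The saddle-point equation `α e^{r} (n + γ r) = n` has a strictly increasing left-hand side, equal to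
`α n < n` at `0` and to `n + γ log(1/α) > n` at `log(1/α)`, which gives existence and uniqueness of
`r₀`; at `r₀` one has `1 - α e^{r₀} = γ r₀ / (n + γ r₀)`, which turns the general bound into the
saddle-point bound.
-/

open Real Finset Set

lemma le_of_hasDerivAt_le {f g f' g' : ℝ → ℝ} {a b : ℝ} (hab : a ≤ b)
    (hf : ∀ x, HasDerivAt f (f' x) x) (hg : ∀ x, HasDerivAt g (g' x) x) (ha : f a ≤ g a)
    (hfg : ∀ x ∈ Ico a b, f' x ≤ g' x) : f b ≤ g b :=
  image_le_of_deriv_right_le_deriv_boundary (fun x _ => (hf x).continuousAt.continuousWithinAt)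
    (fun x _ => (hf x).hasDerivWithinAt) ha (fun x _ => (hg x).continuousAt.continuousWithinAt)
    (fun x _ => (hg x).hasDerivWithinAt) hfg ⟨hab, le_rfl⟩

lemma hasDerivAt_pow_succ_div_factorial (n : ℕ) (x : ℝ) :
    HasDerivAt (fun t : ℝ => t ^ (n + 1) / (n + 1).factorial) (x ^ n / n.factorial) x := by
  refine ((hasDerivAt_pow (n + 1) x).div_const _).congr_deriv ?_
  rw [Nat.factorial_succ, Nat.add_sub_cancel]
  push_cast
  field_simp

lemma cast_stirling2_succ_succ (n k : ℕ) :
    (stirling2 (n + 1) (k + 1) : ℝ) = (k + 1) * stirling2 n (k + 1) + stirling2 n k := by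
  rw [stirling2]
  push_cast
  ring

lemma stirling2_mul_pow_div_factorial_le (n i : ℕ) {r : ℝ} (hr : 0 ≤ r) :
    stirling2 n i * r ^ n / n.factorial ≤ (exp r - 1) ^ i / i.factorial := by
  induction n generalizing i r with
  | zero =>
    cases i with
    | zero => simp [stirling2]
    | succ k =>
      have : 0 ≤ exp r - 1 := by linarith [one_le_exp hr]
      simp only [stirling2, Nat.cast_zero, zero_mul, zero_div]
      positivity
  | succ n ih =>
    cases i with
    | zero => simp [stirling2]
    | succ k =>
      have hexp : ∀ t, HasDerivAt (fun t => (exp t - 1) ^ (k + 1) / (k + 1).factorial)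
          ((exp t - 1) ^ k / k.factorial * exp t) t := fun t =>
        (hasDerivAt_pow_succ_div_factorial k _).comp t ((hasDerivAt_exp t).sub_const 1)
      have hpow : ∀ t : ℝ, HasDerivAt
          (fun t : ℝ => stirling2 (n + 1) (k + 1) * t ^ (n + 1) / (n + 1).factorial)
          (stirling2 (n + 1) (k + 1) * t ^ n / n.factorial) t := fun t => by
        simpa only [mul_div_assoc] using (hasDerivAt_pow_succ_div_factorial n t).const_mul _
      refine le_of_hasDerivAt_le hr hpow hexp (by simp) fun t ht => ?_
      -- the derivative of `(eᵗ - 1)^(k+1)/(k+1)!` splits like the recurrence of `S(n+1, k+1)`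
      have hk : (exp t - 1) ^ k / k.factorial * exp t =
          (k + 1) * ((exp t - 1) ^ (k + 1) / (k + 1).factorial) + (exp t - 1) ^ k / k.factorial := by
        rw [Nat.factorial_succ]
        push_cast
        field_simp
        ring
      rw [hk, cast_stirling2_succ_succ, add_mul, add_div, mul_assoc, mul_div_assoc]
      exact add_le_add (mul_le_mul_of_nonneg_left (ih (k + 1) ht.1) (by positivity)) (ih k ht.1)

lemma sum_stirling2_mul_le (n : ℕ) {r : ℝ} (hr : 0 < r) {w : ℕ → ℝ} (hw : ∀ i, 0 ≤ w i) :
    ∑ i ∈ range (n + 1), stirling2 n i * w i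
      ≤ n.factorial / r ^ n * ∑ i ∈ range (n + 1), w i * (exp r - 1) ^ i / i.factorial := by
  rw [mul_sum]
  refine sum_le_sum fun i _ => ?_
  calc (stirling2 n i : ℝ) * w i
      = stirling2 n i * r ^ n / n.factorial * (n.factorial / r ^ n) * w i := by field_simp
    _ ≤ (exp r - 1) ^ i / i.factorial * (n.factorial / r ^ n) * w i := by
        gcongr ?_ * _ * _
        · exact hw i
        · exact stirling2_mul_pow_div_factorial_le n i hr.le
    _ = n.factorial / r ^ n * (w i * (exp r - 1) ^ i / i.factorial) := by ring

lemma poch_nonneg {γ : ℝ} (hγ : 0 ≤ γ) (l : ℕ) : 0 ≤ poch γ l :=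
  prod_nonneg fun i _ => by positivity

lemma poch_eq_ascPochhammer_eval (γ : ℝ) (l : ℕ) : poch γ l = (ascPochhammer ℝ l).eval γ := by
  induction l with
  | zero => simp [poch]
  | succ l ih => rw [poch, prod_range_succ, ← poch, ih, ascPochhammer_succ_eval]

lemma poch_div_factorial_eq_choose (γ : ℝ) (l : ℕ) :
    poch γ l / l.factorial = Ring.choose (γ + l - 1) l := by
  rw [← Ring.multichoose_eq, poch_eq_ascPochhammer_eval, ← Polynomial.ascPochhammer_smeval_eq_eval,
    ← Ring.factorial_nsmul_multichoose_eq_ascPochhammer, nsmul_eq_mul]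
  field_simp

lemma hasSum_poch_mul_pow_div_factorial (γ : ℝ) {y : ℝ} (hy : |y| < 1) :
    HasSum (fun l => poch γ l * y ^ l / l.factorial) ((1 - y) ^ (-γ)) := by
  have h := (one_div_one_sub_rpow_hasFPowerSeriesOnBall_zero γ).hasSum (y := y)
    (by rw [Metric.mem_eball, edist_zero_right, enorm_eq_ofReal_abs]; simpa using hy)
  rw [FormalMultilinearSeries.ofScalars_apply_eq', zero_add] at h
  have hterm : (fun l : ℕ => poch γ l * y ^ l / l.factorial) =
      fun l : ℕ => Ring.choose (γ + l - 1) l • y ^ l := by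
    ext l
    rw [smul_eq_mul, ← poch_div_factorial_eq_choose]
    ring
  rwa [hterm, rpow_neg (by linarith [abs_lt.1 hy]), inv_eq_one_div]

lemma sum_range_poch_mul_pow_div_factorial_le {γ y : ℝ} (hγ : 0 ≤ γ) (hy0 : 0 ≤ y) (hy1 : y < 1)
    (n : ℕ) : ∑ l ∈ range n, poch γ l * y ^ l / l.factorial ≤ (1 - y) ^ (-γ) :=
  sum_le_hasSum _ (fun l _ => by have := poch_nonneg hγ l; positivity)
    (hasSum_poch_mul_pow_div_factorial γ (by rwa [abs_of_nonneg hy0]))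

lemma abs_tcoef {α γ : ℝ} (hα0 : 0 ≤ α) (hα1 : α < 1) (hγ : 0 < γ) (n : ℕ) :
    |tcoef α γ n| =
      (γ ^ n)⁻¹ * ∑ i ∈ range (n + 1), stirling2 n i * poch γ i * (α / (1 - α)) ^ i := by
  have hx : 0 ≤ α / (1 - α) := div_nonneg hα0 (by linarith)
  have hsum : 0 ≤ ∑ i ∈ range (n + 1), (stirling2 n i : ℝ) * poch γ i * (α / (1 - α)) ^ i :=
    sum_nonneg fun i _ => by have := poch_nonneg hγ.le i; positivity
  simp only [tcoef, abs_mul, abs_pow, abs_neg, abs_one, one_pow, one_mul, abs_inv, abs_of_pos hγ,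
    abs_of_nonneg hsum]

lemma abs_tcoef_le {α γ r : ℝ} (hα0 : 0 ≤ α) (hα1 : α < 1) (hγ : 0 < γ) (n : ℕ) (hr0 : 0 < r)
    (hr : α * exp r < 1) :
    |tcoef α γ n| ≤ (1 - α) ^ γ * (γ ^ n)⁻¹ * n.factorial * (r ^ n)⁻¹ * (1 - α * exp r) ^ (-γ) := by
  have h1α : 0 < 1 - α := by linarith
  set y := α / (1 - α) * (exp r - 1) with hy
  have hy0 : 0 ≤ y := mul_nonneg (div_nonneg hα0 h1α.le) (by linarith [one_le_exp hr0.le])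
  have hy_sub : 1 - y = (1 - α * exp r) / (1 - α) := by
    rw [hy]
    field_simp
    ring
  have hyγ : (1 - y) ^ (-γ) = (1 - α) ^ γ * (1 - α * exp r) ^ (-γ) := by
    rw [hy_sub, div_rpow (by linarith) h1α.le, rpow_neg h1α.le, div_inv_eq_mul, mul_comm]
  have hy_lt_one : y < 1 := by
    have : 0 < 1 - y := by rw [hy_sub]; exact div_pos (by linarith) h1α
    linarith
  have hw : ∀ i, 0 ≤ poch γ i * (α / (1 - α)) ^ i := fun i => by
    have := poch_nonneg hγ.le i
    have : 0 ≤ α / (1 - α) := div_nonneg hα0 h1α.le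
    positivity
  have hsum : ∑ i ∈ range (n + 1), poch γ i * (α / (1 - α)) ^ i * (exp r - 1) ^ i / i.factorial
      = ∑ i ∈ range (n + 1), poch γ i * y ^ i / i.factorial :=
    sum_congr rfl fun i _ => by rw [hy, mul_pow]; ring
  calc |tcoef α γ n|
      ≤ (γ ^ n)⁻¹ *
          (n.factorial / r ^ n * ∑ i ∈ range (n + 1), poch γ i * y ^ i / i.factorial) := by
        rw [abs_tcoef hα0 hα1 hγ, ← hsum]
        gcongr
        simpa only [mul_assoc] using sum_stirling2_mul_le n hr0 hw
    _ ≤ (γ ^ n)⁻¹ * (n.factorial / r ^ n * (1 - y) ^ (-γ)) := by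
        gcongr
        exact sum_range_poch_mul_pow_div_factorial_le hγ.le hy0 hy_lt_one _
    _ = _ := by rw [hyγ]; ring

section SaddlePoint

variable {α γ c : ℝ}

lemma strictMonoOn_mul_exp_mul_add (hα : 0 < α) (hγ : 0 ≤ γ) (hc : 0 < c) :
    StrictMonoOn (fun r => α * exp r * (c + γ * r)) (Ici 0) := by
  intro a (ha : 0 ≤ a) b _ hab
  have hca : 0 < c + γ * a := by positivity
  have : c + γ * a ≤ c + γ * b := by gcongr
  exact mul_lt_mul_of_pos_of_nonneg' (by gcongr) this hca (by positivity)

lemma exists_mul_exp_mul_add_eq (hα0 : 0 < α) (hα1 : α < 1) (hγ : 0 < γ) (hc : 0 < c) :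
    ∃ r ∈ Ioo 0 (log (1 / α)), α * exp r * (c + γ * r) = c := by
  have hL : 0 < log (1 / α) := log_pos (one_lt_one_div hα0 hα1)
  refine intermediate_value_Ioo hL.le (by fun_prop) ⟨?_, ?_⟩
  · simpa using mul_lt_of_lt_one_left hc hα1
  · rw [exp_log (by positivity), mul_one_div_cancel hα0.ne', one_mul]
    linarith [mul_pos hγ hL]

/-- At `r = c / (c + γ) · log (1/α)` one has `α eʳ = e^{-s}` and `c + γ r = c (1 + s)` with
`s = γ / (c + γ) · log (1/α) > 0`, so the claim is `1 + s < eˢ`. -/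
lemma mul_exp_mul_add_lt (hα0 : 0 < α) (hα1 : α < 1) (hγ : 0 < γ) (hc : 0 < c) :
    α * exp (c / (c + γ) * log (1 / α)) * (c + γ * (c / (c + γ) * log (1 / α))) < c := by
  have hL : 0 < log (1 / α) := log_pos (one_lt_one_div hα0 hα1)
  set s := γ / (c + γ) * log (1 / α) with hs
  have hs0 : 0 < s := by positivity
  have hexp : α * exp (c / (c + γ) * log (1 / α)) = exp (-s) := by
    nth_rewrite 1 [← exp_log hα0]
    rw [← exp_add, hs, one_div, log_inv]
    congr 1
    field_simp
    ring
  have hlin : c + γ * (c / (c + γ) * log (1 / α)) = c * (1 + s) := by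
    rw [hs]
    field_simp
  rw [hexp, hlin, exp_neg, inv_mul_lt_iff₀ (exp_pos _)]
  nlinarith [add_one_lt_exp hs0.ne']

end SaddlePoint

lemma abs_tcoef_le_of_saddle {α γ r₀ : ℝ} (hα0 : 0 ≤ α) (hα1 : α < 1) (hγ : 0 < γ) (n : ℕ)
    (hr₀ : 0 < r₀) (hsaddle : α * exp r₀ * (n + γ * r₀) = n) :
    |tcoef α γ n| ≤ (1 - α) ^ γ * n.factorial * (γ * r₀) ^ (-(n : ℝ) - γ) * (n + γ * r₀) ^ γ := by
  have hd : 0 < (n : ℝ) + γ * r₀ := by positivity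
  have hγr : 0 < γ * r₀ := by positivity
  have h1 : 1 - α * exp r₀ = γ * r₀ / (n + γ * r₀) := by
    rw [eq_div_iff hd.ne', sub_mul, one_mul, hsaddle]
    ring
  have hlt : α * exp r₀ < 1 := by linarith [h1 ▸ div_pos hγr hd]
  convert abs_tcoef_le hα0 hα1 hγ n hr₀ hlt using 1
  rw [h1, div_rpow hγr.le hd.le, rpow_neg hd.le, rpow_sub hγr, rpow_neg hγr.le, rpow_neg hγr.le,
    rpow_natCast, mul_pow]
  field_simp

/-- For `0 < α < 1`, `γ > 0`, `n ≥ 1` there is a unique `r₀ > 0` with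
`α e^{r₀}(n + γ r₀) = n`; it satisfies `n(n+γ)^{−1} log(1/α) < r₀ < log(1/α)`, and
`|t_n| ≤ (1−α)^γ n! (γ r₀)^{−n−γ} (n + γ r₀)^γ`. Moreover, for all `0 < r < log(1/α)`,
`|t_n| ≤ (1−α)^γ γ^{−n} n! r^{−n} (1 − α e^r)^{−γ}`. -/
theorem tcoef_saddle_bound (α γ : ℝ) (hα0 : 0 < α) (hα1 : α < 1) (hγ : 0 < γ)
    (n : ℕ) (hn : 1 ≤ n) :
    (∃ r₀ : ℝ, (0 < r₀ ∧ α * Real.exp r₀ * ((n : ℝ) + γ * r₀) = (n : ℝ)) ∧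
      (∀ r : ℝ, 0 < r → α * Real.exp r * ((n : ℝ) + γ * r) = (n : ℝ) → r = r₀) ∧
      (n : ℝ) / ((n : ℝ) + γ) * Real.log (1/α) < r₀ ∧ r₀ < Real.log (1/α) ∧
      |tcoef α γ n| ≤ (1 - α) ^ γ * (Nat.factorial n) *
        (γ * r₀) ^ (-(n : ℝ) - γ) * ((n : ℝ) + γ * r₀) ^ γ) ∧
    (∀ r : ℝ, 0 < r → r < Real.log (1/α) →
      |tcoef α γ n| ≤ (1 - α) ^ γ * (γ^n)⁻¹ * (Nat.factorial n) *
        (r^n)⁻¹ * (1 - α * Real.exp r) ^ (-γ)) := by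
  have hn0 : (0 : ℝ) < n := by exact_mod_cast hn
  have hmono := strictMonoOn_mul_exp_mul_add hα0 hγ.le hn0
  obtain ⟨r₀, ⟨hr₀, hr₀L⟩, hsaddle⟩ := exists_mul_exp_mul_add_eq hα0 hα1 hγ hn0
  refine ⟨⟨r₀, ⟨hr₀, hsaddle⟩, fun r hr hr' => hmono.injOn hr.le hr₀.le (hr'.trans hsaddle.symm),
    ?_, hr₀L, abs_tcoef_le_of_saddle hα0.le hα1 hγ n hr₀ hsaddle⟩, fun r hr hrL => ?_⟩
  · have hcL : 0 ≤ n / (n + γ) * log (1 / α) := (mul_pos (by positivity) (hr₀.trans hr₀L)).le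
    refine (hmono.lt_iff_lt hcL hr₀.le).1 ?_
    simpa only [hsaddle] using mul_exp_mul_add_lt hα0 hα1 hγ hn0
  · refine abs_tcoef_le hα0.le hα1 hγ n hr ?_
    calc α * exp r < α * exp (log (1 / α)) := by gcongr
      _ = 1 := by rw [exp_log (by positivity), mul_one_div_cancel hα0.ne']
end

section
/- Let 0 < α < 1, γ > 0 and n ≥ 1. Then the coefficients t_n satisfy the mixed difference equation t_n(α, γ) = t_{n−1}(α, γ) − (1−α)^{−1} (1 + γ^{−1})^{n−1} t_{n−1}(α, γ+1). Equivalently, setting t̃_n(α,γ) := γ^n t_n(α,γ), one has t̃_n(α,γ) = γ t̃_{n−1}(α,γ) − γ(1−α)^{−1} t̃_{n−1}(α, γ+1). -/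
/-
With x = α/(1−α) one has γⁿ tₙ(α,γ) = (−1)ⁿ Pₙ(γ,x), where Pₙ(γ,x) = ∑ᵢ S(n,i) (γ)ᵢ xⁱ.
The Stirling recurrence S(n+1,k+1) = (k+1) S(n,k+1) + S(n,k), combined with
(γ)ₖ (γ+k) = (γ)ₖ₊₁ = γ (γ+1)ₖ, gives Pₙ₊₁(γ,x) = γ(1+x) Pₙ(γ+1,x) − γ Pₙ(γ,x),
and 1 + x = (1−α)⁻¹. Dividing by γⁿ gives the unscaled form.
-/

open Finset

theorem stirling2_eq_stirlingSecond : stirling2 = Nat.stirlingSecond := by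
  funext n k
  induction n generalizing k with
  | zero => cases k <;> rfl
  | succ n ih => cases k <;> simp [stirling2, Nat.stirlingSecond_succ_succ, ih]

theorem poch_eq_eval_ascPochhammer (γ : ℝ) (k : ℕ) :
    poch γ k = (ascPochhammer ℝ k).eval γ := by
  induction k with
  | zero => simp [poch]
  | succ k ih => rw [poch, prod_range_succ, ← poch, ih, ascPochhammer_succ_eval]

theorem poch_succ (γ : ℝ) (k : ℕ) : poch γ (k + 1) = poch γ k * (γ + k) :=
  prod_range_succ _ _

theorem poch_succ_eq_mul_poch_add_one (γ : ℝ) (k : ℕ) :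
    poch γ (k + 1) = γ * poch (γ + 1) k := by
  simp [poch_eq_eval_ascPochhammer, ascPochhammer_succ_left]

theorem sum_range_stirling2_shift (n : ℕ) (g : ℕ → ℝ) (hg : g 0 = 0) :
    ∑ k ∈ range (n + 1), (stirling2 n (k + 1) : ℝ) * g (k + 1)
      = ∑ k ∈ range (n + 1), (stirling2 n k : ℝ) * g k := by
  have h := sum_range_succ' (fun k ↦ (stirling2 n k : ℝ) * g k) (n + 1)
  rw [sum_range_succ, stirling2_eq_stirlingSecond, Nat.stirlingSecond_eq_zero_of_lt n.lt_succ_self]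
    at h
  simpa [hg, stirling2_eq_stirlingSecond] using h.symm

noncomputable def stirlingPochSum (n : ℕ) (γ x : ℝ) : ℝ :=
  ∑ i ∈ range (n + 1), (stirling2 n i : ℝ) * poch γ i * x ^ i

theorem stirlingPochSum_succ (n : ℕ) (γ x : ℝ) :
    stirlingPochSum (n + 1) γ x
      = γ * (1 + x) * stirlingPochSum n (γ + 1) x - γ * stirlingPochSum n γ x := by
  have hS (k : ℕ) : (stirling2 (n + 1) (k + 1) : ℝ)
      = (stirling2 n (k + 1) : ℝ) * (k + 1) + stirling2 n k := by
    rw [stirling2_eq_stirlingSecond, Nat.stirlingSecond_succ_succ]; push_cast; ring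
  calc stirlingPochSum (n + 1) γ x
      = ∑ k ∈ range (n + 1),
          (stirling2 (n + 1) (k + 1) : ℝ) * poch γ (k + 1) * x ^ (k + 1) := by
        simp [stirlingPochSum, sum_range_succ' _ (n + 1), stirling2_eq_stirlingSecond]
    _ = ∑ k ∈ range (n + 1),
            (stirling2 n (k + 1) : ℝ) * (((k + 1 : ℕ) : ℝ) * poch γ (k + 1) * x ^ (k + 1))
          + ∑ k ∈ range (n + 1), (stirling2 n k : ℝ) * (poch γ (k + 1) * x ^ (k + 1)) := by
        rw [← sum_add_distrib]
        refine sum_congr rfl fun k _ ↦ ?_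
        rw [hS]
        push_cast
        ring
    _ = ∑ k ∈ range (n + 1),
          (stirling2 n k : ℝ) * (k * poch γ k * x ^ k + poch γ (k + 1) * x ^ (k + 1)) := by
        rw [sum_range_stirling2_shift n (fun k ↦ (k : ℝ) * poch γ k * x ^ k) (by simp),
          ← sum_add_distrib]
        simp only [mul_add]
    _ = γ * (1 + x) * stirlingPochSum n (γ + 1) x - γ * stirlingPochSum n γ x := by
        rw [stirlingPochSum, stirlingPochSum, mul_sum, mul_sum, ← sum_sub_distrib]
        refine sum_congr rfl fun k _ ↦ ?_
        have h := poch_succ_eq_mul_poch_add_one γ k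
        rw [poch_succ] at h
        rw [poch_succ_eq_mul_poch_add_one]
        linear_combination (stirling2 n k : ℝ) * x ^ k * h

theorem pow_mul_tcoef (α : ℝ) {γ : ℝ} (hγ : γ ≠ 0) (n : ℕ) :
    γ ^ n * tcoef α γ n = (-1) ^ n * stirlingPochSum n γ (α / (1 - α)) := by
  rw [tcoef, ← stirlingPochSum]
  field_simp

theorem tcoef_mixed_difference_general (α γ : ℝ) (hα1 : α < 1) (hγ : 0 < γ)
    (n : ℕ) (hn : 1 ≤ n) :
    tcoef α γ n = tcoef α γ (n-1)
      - (1 - α)⁻¹ * (1 + γ⁻¹)^(n-1) * tcoef α (γ+1) (n-1) ∧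
    γ^n * tcoef α γ n = γ * (γ^(n-1) * tcoef α γ (n-1))
      - γ * (1 - α)⁻¹ * ((γ+1)^(n-1) * tcoef α (γ+1) (n-1)) := by
  obtain ⟨m, rfl⟩ := Nat.exists_eq_add_of_le' hn
  rw [Nat.add_sub_cancel]
  have hγ0 : γ ≠ 0 := hγ.ne'
  have hγ1 : γ + 1 ≠ 0 := by positivity
  have hx : 1 + α / (1 - α) = (1 - α)⁻¹ := by field_simp [(sub_pos.2 hα1).ne']; ring
  have scaled : γ ^ (m + 1) * tcoef α γ (m + 1) = γ * (γ ^ m * tcoef α γ m)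
      - γ * (1 - α)⁻¹ * ((γ + 1) ^ m * tcoef α (γ + 1) m) := by
    rw [pow_mul_tcoef α hγ0, pow_mul_tcoef α hγ0, pow_mul_tcoef α hγ1, stirlingPochSum_succ,
      hx]
    ring
  refine ⟨mul_left_cancel₀ (pow_ne_zero (m + 1) hγ0) ?_, scaled⟩
  rw [scaled, show 1 + γ⁻¹ = (γ + 1) / γ by field_simp, div_pow]
  field_simp
  ring

/-- For `0 < α < 1`, `γ > 0`, `n ≥ 1`:
`t_n(α,γ) = t_{n−1}(α,γ) − (1−α)^{−1}(1+γ^{−1})^{n−1} t_{n−1}(α,γ+1)`; equivalently, with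
`t̃_n(α,γ) = γ^n t_n(α,γ)`, `t̃_n(α,γ) = γ t̃_{n−1}(α,γ) − γ(1−α)^{−1} t̃_{n−1}(α,γ+1)`. -/
theorem tcoef_mixed_difference (α γ : ℝ) (hα0 : 0 < α) (hα1 : α < 1) (hγ : 0 < γ)
    (n : ℕ) (hn : 1 ≤ n) :
    tcoef α γ n = tcoef α γ (n-1)
      - (1 - α)⁻¹ * (1 + γ⁻¹)^(n-1) * tcoef α (γ+1) (n-1) ∧
    γ^n * tcoef α γ n = γ * (γ^(n-1) * tcoef α γ (n-1))
      - γ * (1 - α)⁻¹ * ((γ+1)^(n-1) * tcoef α (γ+1) (n-1)) :=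
  tcoef_mixed_difference_general α γ hα1 hγ n hn
end
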